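/- Let D be a reduced pipe dream with movable cross tile (i,j), h = h_{ij}(D), k = k_{ij}(D). Then M_{ij}(D) equals the pipe dream T obtained from D by: (i) for each row r ∈ [h,i] such that Path_{ij}(D) contains a bump tile of D in row r, replacing the tile (r,j) with a bump; (ii) for each column c ∈ [j,k] such that Path_{ij}(D) contains a bump tile of D in column c, replacing the tile (i,c) with a bump; (iii) replacing every bump tile on Path_{ij}(D) with a cross, except the endpoints (h,j) and (i,k). -/

import Mathlib

open Finset

/-- A pipe dream is encoded as a tiling of the (1-indexed) grid:
`true` = cross tile (+), `false` = bump tile (•). -/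
abbrev PipeDream := ℕ × ℕ → Bool

namespace PipeDream

/-- All cross tiles lie in the staircase {(i,j) | 1 ≤ i, 1 ≤ j, i+j ≤ n+1}. -/
def InStaircase (n : ℕ) (D : PipeDream) : Prop :=
  ∀ i j, D (i, j) = true → 1 ≤ i ∧ 1 ≤ j ∧ i + j ≤ n + 1

/-- Reading word: rows top to bottom, within each row right to left; a cross at
(i,j) contributes the simple transposition s_{i+j-1}. -/
def word (n : ℕ) (D : PipeDream) : List ℕ :=
  (List.range n).flatMap (fun i =>
    ((List.range n).reverse.filterMap (fun j =>
      if D (i + 1, j + 1) = true then some (i + j + 1) else none)))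

/-- The permutation of ℕ realized by the wires of the pipe dream. -/
def perm (n : ℕ) (D : PipeDream) : Equiv.Perm ℕ :=
  (List.map (fun k => Equiv.swap k (k + 1)) (word n D)).prod

def crossCount (n : ℕ) (D : PipeDream) : ℕ := (word n D).length

/-- Number of inversions of w among 1..n (the Coxeter length of w ∈ S_n). -/
def invCount (w : Equiv.Perm ℕ) (n : ℕ) : ℕ :=
  (((Finset.Icc 1 n) ×ˢ (Finset.Icc 1 n)).filter
    (fun p => p.1 < p.2 ∧ w p.2 < w p.1)).card

/-- Reduced pipe dreams for w ∈ S_n: crosses in the staircase, wires realize w,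
and no two wires cross twice (equivalently, #crosses = ℓ(w)). -/
def RPD (n : ℕ) (w : Equiv.Perm ℕ) : Set PipeDream :=
  {D | InStaircase n D ∧ perm n D = w ∧ crossCount n D = invCount w n}

/-- (i,j) is a movable cross tile: a cross with a bump above it in column j. -/
def Movable (D : PipeDream) (i j : ℕ) : Prop :=
  D (i, j) = true ∧ ∃ h, 1 ≤ h ∧ h < i ∧ D (h, j) = false

/-- h_{ij}(D): largest h ∈ [1,i-1] with a bump at (h,j). -/
def hIdx (D : PipeDream) (i j : ℕ) : ℕ :=
  ((Finset.Ico 1 i).filter (fun h => D (h, j) = false)).sup id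

/-- k_{ij}(D): least k ∈ [j+1,n] with a bump at (i,k). -/
def kIdx (n : ℕ) (D : PipeDream) (i j : ℕ) : ℕ :=
  WithTop.untopD 0 (((Finset.Icc (j + 1) n).filter (fun k => D (i, k) = false)).min)

/-- Rect_{ij}(D) = [h,i] × [j,k]. -/
def Rect (n : ℕ) (D : PipeDream) (i j : ℕ) : Finset (ℕ × ℕ) :=
  Finset.Icc (hIdx D i j, j) (i, kIdx n D i j)

/-- max_bump_row_{ij}(D): largest p ∈ [h,i) whose row contains a bump tile in Rect. -/
def maxBumpRow (n : ℕ) (D : PipeDream) (i j : ℕ) : ℕ :=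
  ((Finset.Ico (hIdx D i j) i).filter
    (fun p => ∃ q ∈ Finset.Icc j (kIdx n D i j), D (p, q) = false)).sup id

/-- min_bump_col_{ij}(D): least q ∈ (j,k] whose column contains a bump tile in Rect. -/
def minBumpCol (n : ℕ) (D : PipeDream) (i j : ℕ) : ℕ :=
  WithTop.untopD 0
    (((Finset.Icc (j + 1) (kIdx n D i j)).filter
      (fun q => ∃ p ∈ Finset.Icc (hIdx D i j) i, D (p, q) = false)).min)

/-- (i,j) is ladder movable: the bumps of Rect_{ij}(D) are exactly the three
corners (h,j), (h,k), (i,k). -/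
def LadderMovable (n : ℕ) (D : PipeDream) (i j : ℕ) : Prop :=
  Movable D i j ∧
    ∀ p q, (p, q) ∈ Rect n D i j →
      (D (p, q) = false ↔
        ((p, q) = (hIdx D i j, j) ∨ (p, q) = (hIdx D i j, kIdx n D i j) ∨
          (p, q) = (i, kIdx n D i j)))

/-- Generalized ladder move L_{ij}: swap the cross at (i,j) with the bump at (h,k). -/
def ladderMove (n : ℕ) (D : PipeDream) (i j : ℕ) : PipeDream :=
  fun st =>
    if st = (i, j) then false
    else if st = (hIdx D i j, kIdx n D i j) then true
    else D st

/-- One covering step of the ladder-move order on RPD(w). -/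
def LadderStep (n : ℕ) (D Q : PipeDream) : Prop :=
  ∃ i j, LadderMovable n D i j ∧ Q = ladderMove n D i j

/-- D ≤ Q in the ladder-move order (Q is obtained from D by a possibly empty
sequence of generalized ladder moves). -/
def ladderLE (n : ℕ) (D Q : PipeDream) : Prop :=
  Relation.ReflTransGen (LadderStep n) D Q

/-- One ladder-move step performed at a position northeast of (i,j). -/
def LadderStepNE (n i j : ℕ) (D Q : PipeDream) : Prop :=
  ∃ p q, p ≤ i ∧ j ≤ q ∧ LadderMovable n D p q ∧ Q = ladderMove n D p q

/-- V_{ij}(D): pipe dreams reachable from D by ladder moves at positions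
northeast of (i,j), having a bump at (i,j). -/
def V (n : ℕ) (D : PipeDream) (i j : ℕ) : Set PipeDream :=
  {Q | Relation.ReflTransGen (LadderStepNE n i j) D Q ∧ Q (i, j) = false}

/-- Auxiliary construction of Path_{ij}(D), with fuel (the row number strictly
decreases at each step, so fuel `i` always suffices). -/
def pathAux (n : ℕ) (D : PipeDream) (j : ℕ) : ℕ → ℕ × ℕ → Finset (ℕ × ℕ)
  | 0, _ => ∅
  | fuel + 1, (p, q) =>
      let p' := maxBumpRow n D p j
      let q' := WithTop.untopD j
        (((Finset.Icc j n).filter (fun t => D (p', t) = false)).min)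
      let seg := ((Finset.Icc p' p).image fun r => (r, q)) ∪
        ((Finset.Icc q' q).image fun t => (p', t))
      if q' = j then seg else seg ∪ pathAux n D j fuel (p', q')

/-- Path_{ij}(D): the lattice path from (i, k_{ij}(D)) to (h_{ij}(D), j). -/
def Path (n : ℕ) (D : PipeDream) (i j : ℕ) : Finset (ℕ × ℕ) :=
  pathAux n D j i (i, kIdx n D i j)

open scoped Classical in
/-- Shape_{ij}(D): tiles of Rect_{ij}(D) weakly below Path_{ij}(D). -/
noncomputable def Shape (n : ℕ) (D : PipeDream) (i j : ℕ) : Finset (ℕ × ℕ) :=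
  (Rect n D i j).filter fun st => ∃ p' ≤ st.1, (p', st.2) ∈ Path n D i j

/-- The move operation M_{ij} of Definition 3.4, written with fuel:
(i) if max_bump_row = h and min_bump_col = k, apply the ladder move L_{ij};
(ii) if max_bump_row = a > h, recurse as M_{ij} ∘ M_{aj};
(iii) otherwise recurse as M_{ij} ∘ M_{ib} with b = min_bump_col. -/
def moveAux (n : ℕ) : ℕ → PipeDream → ℕ → ℕ → PipeDream
  | 0, D, _, _ => D
  | fuel + 1, D, i, j =>
      if maxBumpRow n D i j = hIdx D i j ∧ minBumpCol n D i j = kIdx n D i j then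
        ladderMove n D i j
      else if hIdx D i j < maxBumpRow n D i j then
        moveAux n fuel (moveAux n fuel D (maxBumpRow n D i j) j) i j
      else
        moveAux n fuel (moveAux n fuel D i (minBumpCol n D i j)) i j

/-- The move operation M_{ij}.  The fuel `(n+2)^(n+2)` vastly exceeds the depth
of the recursion of Definition 3.4, so `move` agrees with M on all inputs for
which the recursion makes sense. -/
def move (n : ℕ) (D : PipeDream) (i j : ℕ) : PipeDream :=
  moveAux n ((n + 2) ^ (n + 2)) D i j

/-- (p,q) is northeast of (i,j). -/
def NorthEastOf (p q i j : ℕ) : Prop := p ≤ i ∧ j ≤ q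

/-- (i,j) and (p,q) are southwest-incomparable. -/
def SWIncomparable (i j p q : ℕ) : Prop := (i < p ∧ j < q) ∨ (p < i ∧ q < j)

end PipeDream

namespace PipeDream

open scoped Classical

/-- The target function of Statement 5. -/
noncomputable def T (n : ℕ) (D : PipeDream) (i j : ℕ) : PipeDream := fun st =>
  if st.2 = j ∧ hIdx D i j ≤ st.1 ∧ st.1 ≤ i ∧
      (∃ c, (st.1, c) ∈ Path n D i j ∧ D (st.1, c) = false) then false
  else if st.1 = i ∧ j ≤ st.2 ∧ st.2 ≤ kIdx n D i j ∧
      (∃ r, (r, st.2) ∈ Path n D i j ∧ D (r, st.2) = false) then false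
  else if st ∈ Path n D i j ∧ st ≠ (hIdx D i j, j) ∧
      st ≠ (i, kIdx n D i j) ∧ D st = false then true
  else D st

lemma sup_eq_of {s : Finset ℕ} {x : ℕ} (hx : x ∈ s) (hmax : ∀ y ∈ s, y ≤ x) :
    s.sup id = x :=
  le_antisymm (Finset.sup_le hmax) (Finset.le_sup (f := id) hx)

lemma untop'_min_eq_of {d : ℕ} {s : Finset ℕ} {x : ℕ} (hx : x ∈ s)
    (hmin : ∀ y ∈ s, x ≤ y) : WithTop.untopD d s.min = x := by
  have h1 : s.min = (x : WithTop ℕ) := by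
    refine le_antisymm (Finset.min_le hx) (Finset.le_min ?_)
    intro y hy; exact WithTop.coe_le_coe.mpr (hmin y hy)
  rw [h1]; rfl

lemma sup_spec {s : Finset ℕ} (hs : s.Nonempty) :
    s.sup id ∈ s ∧ ∀ y ∈ s, y ≤ s.sup id := by
  obtain ⟨b, hb, hsup⟩ := Finset.exists_mem_eq_sup s hs id
  refine ⟨hsup ▸ hb, fun y hy => Finset.le_sup (f := id) hy⟩

lemma untop'_min_spec {d : ℕ} {s : Finset ℕ} (hs : s.Nonempty) :
    WithTop.untopD d s.min ∈ s ∧ ∀ y ∈ s, WithTop.untopD d s.min ≤ y := by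
  obtain ⟨b, hb, hmin⟩ := s.exists_min_image id hs
  have := untop'_min_eq_of (d := d) hb hmin
  rw [this]; exact ⟨hb, hmin⟩

/-- Characterization of `hIdx`. -/
structure HSpec (D : PipeDream) (i j h : ℕ) : Prop where
  one_le : 1 ≤ h
  lt : h < i
  bump : D (h, j) = false
  cross : ∀ r, h < r → r < i → D (r, j) = true

/-- Characterization of `kIdx`. -/
structure KSpec (n : ℕ) (D : PipeDream) (i j k : ℕ) : Prop where
  lt : j < k
  le : k ≤ n
  bump : D (i, k) = false
  cross : ∀ c, j < c → c < k → D (i, c) = true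

lemma hIdx_eq {D : PipeDream} {i j h : ℕ} (hs : HSpec D i j h) : hIdx D i j = h := by
  unfold hIdx
  refine sup_eq_of ?_ ?_
  · simp only [Finset.mem_filter, Finset.mem_Ico]
    exact ⟨⟨hs.one_le, hs.lt⟩, hs.bump⟩
  · intro y hy
    simp only [Finset.mem_filter, Finset.mem_Ico] at hy
    by_contra hlt
    push_neg at hlt
    have := hs.cross y hlt hy.1.2
    rw [this] at hy; exact absurd hy.2 (by simp)

lemma kIdx_eq {n : ℕ} {D : PipeDream} {i j k : ℕ} (ks : KSpec n D i j k) :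
    kIdx n D i j = k := by
  unfold kIdx
  refine untop'_min_eq_of ?_ ?_
  · simp only [Finset.mem_filter, Finset.mem_Icc]
    exact ⟨⟨ks.lt, ks.le⟩, ks.bump⟩
  · intro y hy
    simp only [Finset.mem_filter, Finset.mem_Icc] at hy
    by_contra hlt
    push_neg at hlt
    have := ks.cross y hy.1.1 hlt
    rw [this] at hy; exact absurd hy.2 (by simp)

lemma hIdx_spec {D : PipeDream} {i j : ℕ} (hm : Movable D i j) :
    HSpec D i j (hIdx D i j) := by
  obtain ⟨hc, h₀, h1, h2, h3⟩ := hm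
  have hne : ((Finset.Ico 1 i).filter (fun h => D (h, j) = false)).Nonempty :=
    ⟨h₀, by simp only [Finset.mem_filter, Finset.mem_Ico]; exact ⟨⟨h1, h2⟩, h3⟩⟩
  obtain ⟨hmem, hmax⟩ := sup_spec hne
  simp only [Finset.mem_filter, Finset.mem_Ico] at hmem
  refine ⟨hmem.1.1, hmem.1.2, hmem.2, ?_⟩
  intro r hr1 hr2
  by_contra hb
  have : r ∈ (Finset.Ico 1 i).filter (fun h => D (h, j) = false) := by
    simp only [Finset.mem_filter, Finset.mem_Ico]
    exact ⟨⟨le_trans hmem.1.1 (le_of_lt hr1), hr2⟩, by simpa using hb⟩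
  exact absurd (hmax r this) (not_le.mpr hr1)

lemma row_zero_bump {n : ℕ} {D : PipeDream} (hst : InStaircase n D) (c : ℕ) :
    D (0, c) = false := by
  by_contra hb
  have := hst 0 c (by simpa using hb)
  omega

lemma kIdx_spec {n : ℕ} {D : PipeDream} {i j : ℕ} (hst : InStaircase n D)
    (hm : Movable D i j) : KSpec n D i j (kIdx n D i j) := by
  unfold kIdx
  have hij := hst i j hm.1
  have hh := hIdx_spec hm
  have hi2 : 2 ≤ i := lt_of_le_of_lt hh.one_le hh.lt
  have hwit : D (i, n + 2 - i) = false := by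
    by_contra hb
    have := hst i (n + 2 - i) (by simpa using hb)
    omega
  have hne : ((Finset.Icc (j + 1) n).filter (fun k => D (i, k) = false)).Nonempty :=
    ⟨n + 2 - i, by
      simp only [Finset.mem_filter, Finset.mem_Icc]
      exact ⟨⟨by omega, by omega⟩, hwit⟩⟩
  obtain ⟨hmem, hmin⟩ := untop'_min_spec (d := 0) hne
  simp only [Finset.mem_filter, Finset.mem_Icc] at hmem
  refine ⟨hmem.1.1, hmem.1.2, hmem.2, ?_⟩
  intro c hc1 hc2
  by_contra hb
  have : c ∈ (Finset.Icc (j + 1) n).filter (fun k => D (i, k) = false) := by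
    simp only [Finset.mem_filter, Finset.mem_Icc]
    exact ⟨⟨hc1, by omega⟩, by simpa using hb⟩
  exact absurd (hmin c this) (not_le.mpr hc2)

end PipeDream

namespace PipeDream

open scoped Classical

/-- Characterization of `maxBumpRow`. -/
structure ASpec (n : ℕ) (D : PipeDream) (i j h k a : ℕ) : Prop where
  le : h ≤ a
  lt : a < i
  bump : ∃ q, j ≤ q ∧ q ≤ k ∧ D (a, q) = false
  cross : ∀ p, a < p → p < i → ∀ q, j ≤ q → q ≤ k → D (p, q) = true

/-- Characterization of `minBumpCol`. -/
structure BSpec (n : ℕ) (D : PipeDream) (i j h k b : ℕ) : Prop where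
  lt : j < b
  le : b ≤ k
  bump : ∃ p, h ≤ p ∧ p ≤ i ∧ D (p, b) = false
  cross : ∀ q, j < q → q < b → ∀ p, h ≤ p → p ≤ i → D (p, q) = true

lemma maxBumpRow_eq {n : ℕ} {D : PipeDream} {i j h k a : ℕ}
    (hh : hIdx D i j = h) (hk : kIdx n D i j = k)
    (hs : ASpec n D i j h k a) : maxBumpRow n D i j = a := by
  unfold maxBumpRow
  rw [hh, hk]
  refine sup_eq_of ?_ ?_
  · refine Finset.mem_filter.mpr ⟨Finset.mem_Ico.mpr ⟨hs.le, hs.lt⟩, ?_⟩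
    obtain ⟨q, hq1, hq2, hq3⟩ := hs.bump
    exact ⟨q, Finset.mem_Icc.mpr ⟨hq1, hq2⟩, hq3⟩
  · intro y hy
    obtain ⟨hy1, q, hq, hq3⟩ := Finset.mem_filter.mp hy
    rw [Finset.mem_Ico] at hy1
    rw [Finset.mem_Icc] at hq
    by_contra hlt
    push_neg at hlt
    rw [hs.cross y hlt hy1.2 q hq.1 hq.2] at hq3
    exact absurd hq3 (by simp)

lemma maxBumpRow_spec {n : ℕ} {D : PipeDream} {i j : ℕ}
    (hh : HSpec D i j (hIdx D i j)) (hk : KSpec n D i j (kIdx n D i j)) :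
    ASpec n D i j (hIdx D i j) (kIdx n D i j) (maxBumpRow n D i j) := by
  unfold maxBumpRow
  set S := (Finset.Ico (hIdx D i j) i).filter
      (fun p => ∃ q ∈ Finset.Icc j (kIdx n D i j), D (p, q) = false) with hS
  have hne : S.Nonempty := by
    refine ⟨hIdx D i j, Finset.mem_filter.mpr ⟨Finset.mem_Ico.mpr ⟨le_refl _, hh.lt⟩,
      j, Finset.mem_Icc.mpr ⟨le_refl _, le_of_lt hk.lt⟩, hh.bump⟩⟩
  obtain ⟨hmem, hmax⟩ := sup_spec hne
  obtain ⟨hm0, q, hq, hq3⟩ := Finset.mem_filter.mp hmem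
  rw [Finset.mem_Ico] at hm0
  rw [Finset.mem_Icc] at hq
  refine ⟨hm0.1, hm0.2, ⟨q, hq.1, hq.2, hq3⟩, ?_⟩
  intro p hp1 hp2 q' hq1' hq2'
  by_contra hb
  have hpmem : p ∈ S := Finset.mem_filter.mpr ⟨Finset.mem_Ico.mpr
    ⟨le_trans hm0.1 (le_of_lt hp1), hp2⟩, q', Finset.mem_Icc.mpr ⟨hq1', hq2'⟩,
    by simpa using hb⟩
  exact absurd (hmax p hpmem) (not_le.mpr hp1)

lemma minBumpCol_eq {n : ℕ} {D : PipeDream} {i j h k b : ℕ}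
    (hh : hIdx D i j = h) (hk : kIdx n D i j = k)
    (hs : BSpec n D i j h k b) : minBumpCol n D i j = b := by
  unfold minBumpCol
  rw [hh, hk]
  refine untop'_min_eq_of ?_ ?_
  · refine Finset.mem_filter.mpr ⟨Finset.mem_Icc.mpr ⟨hs.lt, hs.le⟩, ?_⟩
    obtain ⟨p, hp1, hp2, hp3⟩ := hs.bump
    exact ⟨p, Finset.mem_Icc.mpr ⟨hp1, hp2⟩, hp3⟩
  · intro y hy
    obtain ⟨hy1, p, hp, hp3⟩ := Finset.mem_filter.mp hy
    rw [Finset.mem_Icc] at hy1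
    rw [Finset.mem_Icc] at hp
    by_contra hlt
    push_neg at hlt
    rw [hs.cross y hy1.1 hlt p hp.1 hp.2] at hp3
    exact absurd hp3 (by simp)

lemma minBumpCol_spec {n : ℕ} {D : PipeDream} {i j : ℕ}
    (hh : HSpec D i j (hIdx D i j)) (hk : KSpec n D i j (kIdx n D i j)) :
    BSpec n D i j (hIdx D i j) (kIdx n D i j) (minBumpCol n D i j) := by
  unfold minBumpCol
  set S := (Finset.Icc (j + 1) (kIdx n D i j)).filter
      (fun q => ∃ p ∈ Finset.Icc (hIdx D i j) i, D (p, q) = false) with hS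
  have hne : S.Nonempty := by
    refine ⟨kIdx n D i j, Finset.mem_filter.mpr ⟨Finset.mem_Icc.mpr ⟨hk.lt, le_refl _⟩,
      i, Finset.mem_Icc.mpr ⟨le_of_lt hh.lt, le_refl _⟩, hk.bump⟩⟩
  obtain ⟨hmem, hmin⟩ := untop'_min_spec (d := 0) hne
  obtain ⟨hm0, p, hp, hp3⟩ := Finset.mem_filter.mp hmem
  rw [Finset.mem_Icc] at hm0
  rw [Finset.mem_Icc] at hp
  refine ⟨hm0.1, hm0.2, ⟨p, hp.1, hp.2, hp3⟩, ?_⟩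
  intro q hq1 hq2 p' hp1' hp2'
  by_contra hb
  have hqmem : q ∈ S := Finset.mem_filter.mpr ⟨Finset.mem_Icc.mpr
    ⟨hq1, le_trans (le_of_lt hq2) hm0.2⟩, p', Finset.mem_Icc.mpr ⟨hp1', hp2'⟩,
    by simpa using hb⟩
  exact absurd (hmin q hqmem) (not_le.mpr hq2)

end PipeDream

namespace PipeDream

open scoped Classical

lemma pathAux_succ (n : ℕ) (D : PipeDream) (j f p q : ℕ) :
    pathAux n D j (f + 1) (p, q) =
      (if WithTop.untopD j (((Finset.Icc j n).filter
            (fun t => D (maxBumpRow n D p j, t) = false)).min) = j then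
        ((Finset.Icc (maxBumpRow n D p j) p).image fun r => (r, q)) ∪
          ((Finset.Icc (WithTop.untopD j (((Finset.Icc j n).filter
            (fun t => D (maxBumpRow n D p j, t) = false)).min)) q).image
              fun t => (maxBumpRow n D p j, t))
      else
        (((Finset.Icc (maxBumpRow n D p j) p).image fun r => (r, q)) ∪
          ((Finset.Icc (WithTop.untopD j (((Finset.Icc j n).filter
            (fun t => D (maxBumpRow n D p j, t) = false)).min)) q).image
              fun t => (maxBumpRow n D p j, t))) ∪
          pathAux n D j f (maxBumpRow n D p j,
            WithTop.untopD j (((Finset.Icc j n).filter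
              (fun t => D (maxBumpRow n D p j, t) = false)).min))) := rfl

/-- Hypotheses describing a live position of the path recursion. -/
structure PosSpec (n : ℕ) (D : PipeDream) (j h p q : ℕ) : Prop where
  hone : 1 ≤ h
  hlt : h < p
  hbump : D (h, j) = false
  hcross : ∀ r, h < r → r < p → D (r, j) = true
  pcross : D (p, j) = true
  q_first : KSpec n D p j q

lemma PosSpec.hIdx_eq {n : ℕ} {D : PipeDream} {j h p q : ℕ}
    (ps : PosSpec n D j h p q) : hIdx D p j = h :=
  PipeDream.hIdx_eq ⟨ps.hone, ps.hlt, ps.hbump, ps.hcross⟩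

lemma PosSpec.kIdx_eq {n : ℕ} {D : PipeDream} {j h p q : ℕ}
    (ps : PosSpec n D j h p q) : kIdx n D p j = q :=
  PipeDream.kIdx_eq ps.q_first

lemma PosSpec.j_le_n {n : ℕ} {D : PipeDream} {j h p q : ℕ}
    (ps : PosSpec n D j h p q) : j ≤ n :=
  le_trans (le_of_lt ps.q_first.lt) ps.q_first.le

/-- If the row `maxBumpRow` has a bump at column `j`, the path stops there
(and `maxBumpRow = h`). -/
lemma pathAux_eq_hook {n : ℕ} {D : PipeDream} {j h p q : ℕ} (f : ℕ)
    (ps : PosSpec n D j h p q) (ha : maxBumpRow n D p j = h) :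
    pathAux n D j (f + 1) (p, q) =
      ((Finset.Icc h p).image fun r => (r, q)) ∪
        ((Finset.Icc j q).image fun t => (h, t)) := by
  rw [pathAux_succ, ha]
  have hq' : WithTop.untopD j (((Finset.Icc j n).filter
      (fun t => D (h, t) = false)).min) = j := by
    refine untop'_min_eq_of ?_ ?_
    · exact Finset.mem_filter.mpr ⟨Finset.mem_Icc.mpr ⟨le_refl _, ps.j_le_n⟩, ps.hbump⟩
    · intro y hy
      exact (Finset.mem_Icc.mp (Finset.mem_filter.mp hy).1).1
  rw [hq']
  simp

/-- If the row `a := maxBumpRow` has a cross at column `j`, the path recurses. -/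
lemma pathAux_step {n : ℕ} {D : PipeDream} {j h p q a q₂ : ℕ} (f : ℕ)
    (ps : PosSpec n D j h p q) (ha : maxBumpRow n D p j = a)
    (hacross : D (a, j) = true) (hq₂ : KSpec n D a j q₂) :
    pathAux n D j (f + 1) (p, q) =
      (((Finset.Icc a p).image fun r => (r, q)) ∪
        ((Finset.Icc q₂ q).image fun t => (a, t))) ∪
        pathAux n D j f (a, q₂) := by
  rw [pathAux_succ, ha]
  have hq' : WithTop.untopD j (((Finset.Icc j n).filter
      (fun t => D (a, t) = false)).min) = q₂ := by
    refine untop'_min_eq_of ?_ ?_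
    · exact Finset.mem_filter.mpr ⟨Finset.mem_Icc.mpr
        ⟨le_of_lt hq₂.lt, hq₂.le⟩, hq₂.bump⟩
    · intro y hy
      obtain ⟨hy1, hy2⟩ := Finset.mem_filter.mp hy
      rw [Finset.mem_Icc] at hy1
      by_contra hlt
      push_neg at hlt
      rcases Nat.lt_or_ge j y with hjy | hjy
      · rw [hq₂.cross y hjy hlt] at hy2; exact absurd hy2 (by simp)
      · have : y = j := le_antisymm hjy hy1.1
        rw [this, hacross] at hy2; exact absurd hy2 (by simp)
  rw [hq']
  have : ¬ (q₂ = j) := by have := hq₂.lt; omega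
  simp only [this, if_false]

/-- Derived facts about a live position. -/
lemma PosSpec.p_two {n : ℕ} {D : PipeDream} {j h p q : ℕ}
    (ps : PosSpec n D j h p q) : 2 ≤ p := by have := ps.hone; have := ps.hlt; omega

lemma PosSpec.q_add_p {n : ℕ} {D : PipeDream} {j h p q : ℕ} (hst : InStaircase n D)
    (ps : PosSpec n D j h p q) : q + p ≤ n + 2 := by
  by_contra hb
  push_neg at hb
  have hpj := hst p j ps.pcross
  have h1 : j < n + 2 - p := by omega
  have h2 : n + 2 - p < q := by omega
  have := ps.q_first.cross (n + 2 - p) h1 h2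
  have := hst p (n + 2 - p) this
  omega

/-- The spec of the next position of the path recursion, in the recursing case. -/
lemma next_pos_spec {n : ℕ} {D : PipeDream} {j h p q a : ℕ} (hst : InStaircase n D)
    (ps : PosSpec n D j h p q) (ha : maxBumpRow n D p j = a)
    (hacross : D (a, j) = true) :
    h < a ∧ a < p ∧ PosSpec n D j h a (kIdx n D a j) ∧ kIdx n D a j ≤ q := by
  have hsp : ASpec n D p j h q a := by
    have h1 := maxBumpRow_spec (D := D) (i := p) (j := j)
      (by rw [ps.hIdx_eq]; exact ⟨ps.hone, ps.hlt, ps.hbump, ps.hcross⟩)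
      (by rw [ps.kIdx_eq]; exact ps.q_first)
    rw [ps.hIdx_eq, ps.kIdx_eq, ha] at h1
    exact h1
  have hha : h < a := by
    rcases Nat.lt_or_ge h a with h' | h'
    · exact h'
    · have : a = h := le_antisymm h' hsp.le
      rw [this, ps.hbump] at hacross; exact absurd hacross (by simp)
  obtain ⟨qw, hqw1, hqw2, hqw3⟩ := hsp.bump
  have hqwj : j < qw := by
    rcases Nat.lt_or_ge j qw with h' | h'
    · exact h'
    · have : qw = j := le_antisymm h' hqw1
      rw [this, hacross] at hqw3; exact absurd hqw3 (by simp)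
  have hks : KSpec n D a j (kIdx n D a j) := by
    refine kIdx_spec hst ⟨hacross, h, ps.hone, hha, ps.hbump⟩
  have hkle : kIdx n D a j ≤ qw := by
    by_contra hb
    push_neg at hb
    rw [hks.cross qw hqwj hb] at hqw3; exact absurd hqw3 (by simp)
  refine ⟨hha, hsp.lt, ⟨ps.hone, hha, ps.hbump,
    fun r hr1 hr2 => ps.hcross r hr1 (lt_trans hr2 hsp.lt), hacross, hks⟩,
    le_trans hkle hqw2⟩

end PipeDream

namespace PipeDream

open scoped Classical

structure PathFacts (n : ℕ) (j h p q : ℕ) (P : Finset (ℕ × ℕ)) : Prop where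
  mem_start : (p, q) ∈ P
  mem_end : (h, j) ∈ P
  sub : ∀ st ∈ P, h ≤ st.1 ∧ st.1 ≤ p ∧ j ≤ st.2 ∧ st.2 ≤ q
  top : ∀ st ∈ P, st.1 = p → st = (p, q)
  stair : ∀ st ∈ P, st.1 < p → st.1 + st.2 ≤ n + 1

lemma mem_hook {x y u v p' q' : ℕ} {st : ℕ × ℕ} :
    st ∈ ((Finset.Icc x y).image fun r => (r, q')) ∪
      ((Finset.Icc u v).image fun t => (p', t)) ↔
    ((st.2 = q' ∧ x ≤ st.1 ∧ st.1 ≤ y) ∨ (st.1 = p' ∧ u ≤ st.2 ∧ st.2 ≤ v)) := by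
  obtain ⟨r, c⟩ := st
  simp only [Finset.mem_union, Finset.mem_image, Finset.mem_Icc, Prod.mk.injEq]
  constructor
  · rintro (⟨t, ht, rfl, rfl⟩ | ⟨t, ht, rfl, rfl⟩)
    · exact Or.inl ⟨rfl, ht.1, ht.2⟩
    · exact Or.inr ⟨rfl, ht.1, ht.2⟩
  · rintro (⟨rfl, h1, h2⟩ | ⟨rfl, h1, h2⟩)
    · exact Or.inl ⟨r, ⟨h1, h2⟩, rfl, rfl⟩
    · exact Or.inr ⟨c, ⟨h1, h2⟩, rfl, rfl⟩

/-- In the stopping case, `maxBumpRow = h`. -/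
lemma stop_max_eq {n : ℕ} {D : PipeDream} {j h p q : ℕ} (hst : InStaircase n D)
    (ps : PosSpec n D j h p q) (hacross : D (maxBumpRow n D p j, j) = false) :
    maxBumpRow n D p j = h := by
  have hsp : ASpec n D p j h q (maxBumpRow n D p j) := by
    have h1 := maxBumpRow_spec (D := D) (i := p) (j := j)
      (by rw [ps.hIdx_eq]; exact ⟨ps.hone, ps.hlt, ps.hbump, ps.hcross⟩)
      (by rw [ps.kIdx_eq]; exact ps.q_first)
    rw [ps.hIdx_eq, ps.kIdx_eq] at h1
    exact h1
  rcases Nat.lt_or_ge h (maxBumpRow n D p j) with h' | h'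
  · rw [ps.hcross _ h' hsp.lt] at hacross; exact absurd hacross (by simp)
  · exact le_antisymm h' hsp.le

lemma pathMaster {n : ℕ} {D : PipeDream} {j h : ℕ} (hst : InStaircase n D) :
    ∀ p q f, PosSpec n D j h p q → p ≤ f →
      PathFacts n j h p q (pathAux n D j f (p, q)) := by
  intro p
  induction p using Nat.strong_induction_on with
  | _ p IH =>
  intro q f ps hf
  obtain ⟨f', rfl⟩ : ∃ f', f = f' + 1 := ⟨f - 1, by have := ps.p_two; omega⟩
  have hqp := ps.q_add_p hst
  have hhp := ps.hlt
  have hjq := ps.q_first.lt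
  rcases (Bool.eq_false_or_eq_true (D (maxBumpRow n D p j, j))).symm with hacross | hacross
  · -- the path stops : maxBumpRow = h
    have hah := stop_max_eq hst ps hacross
    rw [pathAux_eq_hook f' ps hah]
    refine ⟨?_, ?_, ?_, ?_, ?_⟩
    · rw [mem_hook]; exact Or.inl ⟨rfl, le_of_lt ps.hlt, le_refl _⟩
    · rw [mem_hook]; exact Or.inr ⟨rfl, le_refl _, le_of_lt hjq⟩
    · intro st hmem
      rw [mem_hook] at hmem
      rcases hmem with ⟨h1, h2, h3⟩ | ⟨h1, h2, h3⟩
      · exact ⟨h2, h3, by omega, by omega⟩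
      · exact ⟨by omega, by omega, h2, h3⟩
    · intro st hmem hp
      rw [mem_hook] at hmem
      rcases hmem with ⟨h1, h2, h3⟩ | ⟨h1, h2, h3⟩
      · exact Prod.ext hp h1
      · omega
    · intro st hmem hp
      rw [mem_hook] at hmem
      rcases hmem with ⟨h1, h2, h3⟩ | ⟨h1, h2, h3⟩ <;> omega
  · -- the path recurses
    obtain ⟨hha, hap, ps', hq2le⟩ := next_pos_spec hst ps rfl hacross
    have hjq2 := ps'.q_first.lt
    rw [pathAux_step f' ps rfl hacross ps'.q_first]
    have IH' := IH _ hap (kIdx n D (maxBumpRow n D p j) j) f' ps' (by omega)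
    refine ⟨?_, ?_, ?_, ?_, ?_⟩
    · rw [Finset.mem_union]; left; rw [mem_hook]
      exact Or.inl ⟨rfl, le_of_lt hap, le_refl _⟩
    · rw [Finset.mem_union]; right; exact IH'.mem_end
    · intro st hmem
      rw [Finset.mem_union] at hmem
      rcases hmem with hmem | hmem
      · rw [mem_hook] at hmem
        rcases hmem with ⟨h1, h2, h3⟩ | ⟨h1, h2, h3⟩
        · exact ⟨by omega, h3, by omega, by omega⟩
        · exact ⟨by omega, by omega, by omega, by omega⟩
      · obtain ⟨c1, c2, c3, c4⟩ := IH'.sub st hmem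
        exact ⟨c1, by omega, c3, by omega⟩
    · intro st hmem hp
      rw [Finset.mem_union] at hmem
      rcases hmem with hmem | hmem
      · rw [mem_hook] at hmem
        rcases hmem with ⟨h1, h2, h3⟩ | ⟨h1, h2, h3⟩
        · exact Prod.ext hp h1
        · omega
      · have := (IH'.sub st hmem).2.1; omega
    · intro st hmem hp
      rw [Finset.mem_union] at hmem
      rcases hmem with hmem | hmem
      · rw [mem_hook] at hmem
        rcases hmem with ⟨h1, h2, h3⟩ | ⟨h1, h2, h3⟩ <;> omega
      · rcases Nat.lt_or_ge st.1 (maxBumpRow n D p j) with h' | h'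
        · exact IH'.stair st hmem h'
        · have h4 : st.1 = maxBumpRow n D p j :=
            le_antisymm (IH'.sub st hmem).2.1 h'
          have h5 := IH'.top st hmem h4
          rw [h5]
          show maxBumpRow n D p j + kIdx n D (maxBumpRow n D p j) j ≤ n + 1
          omega

lemma pathAux_fuel {n : ℕ} {D : PipeDream} {j h : ℕ} (hst : InStaircase n D) :
    ∀ p q f f', PosSpec n D j h p q → p ≤ f → p ≤ f' →
      pathAux n D j f (p, q) = pathAux n D j f' (p, q) := by
  intro p
  induction p using Nat.strong_induction_on with
  | _ p IH =>
  intro q f f' ps hf hf'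
  obtain ⟨g, rfl⟩ : ∃ g, f = g + 1 := ⟨f - 1, by have := ps.p_two; omega⟩
  obtain ⟨g', rfl⟩ : ∃ g', f' = g' + 1 := ⟨f' - 1, by have := ps.p_two; omega⟩
  rcases (Bool.eq_false_or_eq_true (D (maxBumpRow n D p j, j))).symm with hacross | hacross
  · have hah := stop_max_eq hst ps hacross
    rw [pathAux_eq_hook g ps hah, pathAux_eq_hook g' ps hah]
  · obtain ⟨hha, hap, ps', _⟩ := next_pos_spec hst ps rfl hacross
    rw [pathAux_step g ps rfl hacross ps'.q_first,
      pathAux_step g' ps rfl hacross ps'.q_first]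
    rw [IH _ hap _ g g' ps' (by omega) (by omega)]

end PipeDream

namespace PipeDream

open scoped Classical

/-- Explicit form of `T` when the path is a simple hook. -/
noncomputable def hookT (D : PipeDream) (i j h k : ℕ) : PipeDream := fun st =>
  if st = (i, j) then false
  else if st.1 = i ∧ j < st.2 ∧ st.2 < k ∧ D (h, st.2) = false then false
  else if st.1 = h ∧ j < st.2 ∧ st.2 ≤ k ∧ D (h, st.2) = false then true
  else D st

lemma posSpec_of_movable {n : ℕ} {D : PipeDream} {i j : ℕ}
    (hst : InStaircase n D) (hm : Movable D i j) :
    PosSpec n D j (hIdx D i j) i (kIdx n D i j) := by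
  obtain ⟨h1, h2, h3, h4⟩ := hIdx_spec hm
  exact ⟨h1, h2, h3, h4, hm.1, kIdx_spec hst hm⟩

lemma Path_eq_hook {n : ℕ} {D : PipeDream} {i j : ℕ}
    (hst : InStaircase n D) (hm : Movable D i j)
    (ha : maxBumpRow n D i j = hIdx D i j) :
    Path n D i j = ((Finset.Icc (hIdx D i j) i).image fun r => (r, kIdx n D i j)) ∪
      ((Finset.Icc j (kIdx n D i j)).image fun t => (hIdx D i j, t)) := by
  have ps := posSpec_of_movable hst hm
  have h2 := ps.p_two
  unfold Path
  obtain ⟨f', hf⟩ : ∃ f', i = f' + 1 := ⟨i - 1, by omega⟩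
  rw [hf] at ps ha ⊢
  rw [pathAux_eq_hook f' ps ha]

lemma T_hook {n : ℕ} {D : PipeDream} {i j : ℕ}
    (hst : InStaircase n D) (hm : Movable D i j)
    (ha : maxBumpRow n D i j = hIdx D i j) :
    T n D i j = hookT D i j (hIdx D i j) (kIdx n D i j) := by
  have ps := posSpec_of_movable hst hm
  have hsp : ASpec n D i j (hIdx D i j) (kIdx n D i j) (hIdx D i j) := by
    have h1 := maxBumpRow_spec (D := D) (i := i) (j := j)
      (hIdx_spec hm) (kIdx_spec hst hm)
    rw [ha] at h1; exact h1
  have hPath := Path_eq_hook hst hm ha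
  set h := hIdx D i j with hh
  set k := kIdx n D i j with hk
  have hbj : D (h, j) = false := ps.hbump
  have hbk : D (i, k) = false := ps.q_first.bump
  have hrect : ∀ p, h < p → p < i → ∀ q, j ≤ q → q ≤ k → D (p, q) = true := hsp.cross
  have hhi : h < i := ps.hlt
  have hjk : j < k := ps.q_first.lt
  have hmem : ∀ x y : ℕ, ((x, y) ∈ Path n D i j) ↔
      ((y = k ∧ h ≤ x ∧ x ≤ i) ∨ (x = h ∧ j ≤ y ∧ y ≤ k)) := by
    intro x y; rw [hPath, mem_hook]
  funext st
  obtain ⟨r, c⟩ := st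
  have A_iff : (c = j ∧ h ≤ r ∧ r ≤ i ∧
      (∃ c', (r, c') ∈ Path n D i j ∧ D (r, c') = false)) ↔
      (c = j ∧ (r = i ∨ r = h)) := by
    constructor
    · rintro ⟨hc, hr1, hr2, c', hcmem, hcb⟩
      rw [hmem] at hcmem
      refine ⟨hc, ?_⟩
      rcases hcmem with ⟨hck, hh1, hh2⟩ | ⟨hrh, hh1, hh2⟩
      · rcases Nat.lt_or_ge r i with h' | h'
        · rcases Nat.lt_or_ge h r with h'' | h''
          · rw [hck, hrect r h'' h' k (le_of_lt hjk) (le_refl _)] at hcb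
            exact absurd hcb (by simp)
          · exact Or.inr (le_antisymm h'' hh1)
        · exact Or.inl (le_antisymm hr2 h')
      · exact Or.inr hrh
    · rintro ⟨hc, hcase⟩
      rcases hcase with hr | hr
      · exact ⟨hc, by omega, by omega, k,
          (hmem r k).mpr (Or.inl ⟨rfl, by omega, by omega⟩),
          by rw [hr]; exact hbk⟩
      · exact ⟨hc, by omega, by omega, j,
          (hmem r j).mpr (Or.inr ⟨hr, le_refl _, le_of_lt hjk⟩),
          by rw [hr]; exact hbj⟩
  have B_iff : (r = i ∧ j ≤ c ∧ c ≤ k ∧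
      (∃ r', (r', c) ∈ Path n D i j ∧ D (r', c) = false)) ↔
      (r = i ∧ j ≤ c ∧ c ≤ k ∧ (c = k ∨ c = j ∨ D (h, c) = false)) := by
    constructor
    · rintro ⟨hr, hc1, hc2, r', hrmem, hrb⟩
      rw [hmem] at hrmem
      refine ⟨hr, hc1, hc2, ?_⟩
      rcases hrmem with ⟨hek, _, _⟩ | ⟨hrh, _, _⟩
      · exact Or.inl hek
      · rw [hrh] at hrb
        exact Or.inr (Or.inr hrb)
    · rintro ⟨hr, hc1, hc2, hcase⟩
      refine ⟨hr, hc1, hc2, ?_⟩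
      rcases hcase with he | he | hb
      · exact ⟨i, (hmem i c).mpr (Or.inl ⟨he, le_of_lt hhi, le_refl _⟩),
          by rw [he]; exact hbk⟩
      · exact ⟨h, (hmem h c).mpr (Or.inr ⟨rfl, by omega, by omega⟩),
          by rw [he]; exact hbj⟩
      · exact ⟨h, (hmem h c).mpr (Or.inr ⟨rfl, hc1, hc2⟩), hb⟩
  have C_iff : ((r, c) ∈ Path n D i j ∧ (r, c) ≠ (h, j) ∧ (r, c) ≠ (i, k) ∧
      D (r, c) = false) ↔ (r = h ∧ j < c ∧ c ≤ k ∧ D (h, c) = false) := by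
    constructor
    · rintro ⟨hmem', hne1, hne2, hb⟩
      rw [hmem] at hmem'
      rcases hmem' with ⟨hck, h1, h2⟩ | ⟨hrh, h1, h2⟩
      · rcases Nat.lt_or_ge h r with h'' | h''
        · rcases Nat.lt_or_ge r i with h' | h'
          · rw [hrect r h'' h' c (hck ▸ le_of_lt hjk) (hck ▸ le_refl _)] at hb
            exact absurd hb (by simp)
          · exact absurd (by rw [le_antisymm h2 h', hck]) hne2
        · have hrh : r = h := le_antisymm h'' h1
          subst hrh hck
          exact ⟨rfl, hjk, le_refl _, hb⟩
      · rcases Nat.lt_or_ge j c with h' | h'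
        · subst hrh
          exact ⟨rfl, h', h2, hb⟩
        · exact absurd (by rw [le_antisymm h' h1, hrh]) hne1
    · rintro ⟨hr, hc1, hc2, hb⟩
      refine ⟨(hmem r c).mpr (Or.inr ⟨hr, le_of_lt hc1, hc2⟩), ?_, ?_,
        by rw [hr]; exact hb⟩
      · intro hcon
        have := congrArg Prod.snd hcon
        simp at this
        omega
      · intro hcon
        have := congrArg Prod.fst hcon
        simp at this
        omega
  simp only [T, hookT]
  rw [if_congr A_iff rfl rfl]
  rw [if_congr (iff_of_eq rfl) rfl (if_congr B_iff rfl
    (if_congr C_iff rfl rfl))]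
  have hval1 : D (i, k) = false := hbk
  have hval2 : D (h, j) = false := hbj
  clear hmem A_iff B_iff C_iff hPath hsp ps hrect hbj hbk
  by_cases h1 : r = i <;> by_cases h2 : c = j <;> by_cases h3 : r = h <;>
    by_cases h4 : c = k <;> by_cases h5 : D (h, c) = false <;>
    by_cases h6 : j < c <;> by_cases h7 : c < k <;>
    simp_all <;>
    first
      | omega
      | (have e1 : ¬ (c ≤ k) := by omega
         have e2 : ¬ (c < k) := by omega
         simp [e1, e2])
      | (have e1 : ¬ (j ≤ c) := by omega
         have e2 : ¬ (j < c) := by omega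
         simp [e1, e2])
      | (have e1 : ¬ (c ≤ kIdx n D i j) := by omega
         have e2 : ¬ (c < kIdx n D i j) := by omega
         simp [e1, e2])

end PipeDream

namespace PipeDream

open scoped Classical

lemma hookT_at_h {D : PipeDream} {i b h k : ℕ} (hhi : h < i) (c' : ℕ) :
    hookT D i b h k (h, c') =
      if b < c' ∧ c' ≤ k ∧ D (h, c') = false then true else D (h, c') := by
  simp only [hookT]
  rw [if_neg (show ¬((h, c') : ℕ × ℕ) = (i, b) by
      intro hcon; have : h = i := congrArg Prod.fst hcon; omega),
    if_neg (show ¬(h = i ∧ b < c' ∧ c' < k ∧ D (h, c') = false) by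
      rintro ⟨he, -⟩; omega)]
  by_cases hcnd : b < c' ∧ c' ≤ k ∧ D (h, c') = false
  · rw [if_pos ⟨by trivial, hcnd.1, hcnd.2.1, hcnd.2.2⟩, if_pos hcnd]
  · rw [if_neg (show ¬(True ∧ b < c' ∧ c' ≤ k ∧ D (h, c') = false) from
        fun hx => hcnd ⟨hx.2.1, hx.2.2.1, hx.2.2.2⟩), if_neg hcnd]

lemma hookT_comp {D : PipeDream} {i j h k b : ℕ}
    (hhi : h < i) (hjb : j < b) (hbk : b < k)
    (hhb : D (h, b) = false)
    (hrow : ∀ q, j < q → q < b → D (h, q) = true) :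
    hookT (hookT D i b h k) i j h b = hookT D i j h k := by
  funext st
  obtain ⟨r, c⟩ := st
  have hout : hookT (hookT D i b h k) i j h b (r, c) =
      (if ((r, c) : ℕ × ℕ) = (i, j) then false
       else if r = i ∧ j < c ∧ c < b ∧ hookT D i b h k (h, c) = false then false
       else if r = h ∧ j < c ∧ c ≤ b ∧ hookT D i b h k (h, c) = false then true
       else hookT D i b h k (r, c)) := rfl
  have hin_rc : hookT D i b h k (r, c) =
      (if ((r, c) : ℕ × ℕ) = (i, b) then false
       else if r = i ∧ b < c ∧ c < k ∧ D (h, c) = false then false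
       else if r = h ∧ b < c ∧ c ≤ k ∧ D (h, c) = false then true
       else D (r, c)) := rfl
  have hrhs : hookT D i j h k (r, c) =
      (if ((r, c) : ℕ × ℕ) = (i, j) then false
       else if r = i ∧ j < c ∧ c < k ∧ D (h, c) = false then false
       else if r = h ∧ j < c ∧ c ≤ k ∧ D (h, c) = false then true
       else D (r, c)) := rfl
  rw [hout, hin_rc, hrhs, hookT_at_h hhi c]
  set X := (if b < c ∧ c ≤ k ∧ D (h, c) = false then true else D (h, c)) with hX
  by_cases h1 : ((r, c) : ℕ × ℕ) = (i, j)
  · rw [if_pos h1, if_pos h1]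
  · rw [if_neg h1, if_neg h1]
    by_cases hri : r = i
    · have hrh : ¬ r = h := by omega
      have hO3 : ¬ (r = h ∧ j < c ∧ c ≤ b ∧ X = false) := fun hx => hrh hx.1
      have hR3 : ¬ (r = h ∧ j < c ∧ c ≤ k ∧ D (h, c) = false) := fun hx => hrh hx.1
      have hI3 : ¬ (r = h ∧ b < c ∧ c ≤ k ∧ D (h, c) = false) := fun hx => hrh hx.1
      by_cases hcb : c = b
      · have hO2 : ¬ (r = i ∧ j < c ∧ c < b ∧ X = false) := by
          rintro ⟨-, -, hz, -⟩; omega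
        rw [if_neg hO2, if_neg hO3,
          if_pos (show ((r, c) : ℕ × ℕ) = (i, b) by rw [hri, hcb]),
          if_pos ⟨hri, by omega, by omega, by rw [hcb]; exact hhb⟩]
      · have hI1 : ¬ ((r, c) : ℕ × ℕ) = (i, b) := by
          intro hcon; exact hcb (congrArg Prod.snd hcon)
        by_cases hrange : b < c ∧ c < k
        · have hO2 : ¬ (r = i ∧ j < c ∧ c < b ∧ X = false) := by
            rintro ⟨-, -, hz, -⟩; omega
          by_cases hD : D (h, c) = false
          · rw [if_neg hO2, if_neg hO3, if_neg hI1,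
              if_pos ⟨hri, hrange.1, hrange.2, hD⟩,
              if_pos ⟨hri, by omega, hrange.2, hD⟩]
          · have hI2 : ¬ (r = i ∧ b < c ∧ c < k ∧ D (h, c) = false) :=
              fun hx => hD hx.2.2.2
            have hR2 : ¬ (r = i ∧ j < c ∧ c < k ∧ D (h, c) = false) :=
              fun hx => hD hx.2.2.2
            rw [if_neg hO2, if_neg hO3, if_neg hI1, if_neg hI2, if_neg hI3,
              if_neg hR2, if_neg hR3]
        · have hsplit : c < b ∨ k ≤ c := by omega
          have hO2 : ¬ (r = i ∧ j < c ∧ c < b ∧ X = false) := by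
            rintro ⟨-, hx1, hx2, hx3⟩
            rw [hX, if_neg (show ¬(b < c ∧ c ≤ k ∧ D (h, c) = false) by
                rintro ⟨hz, -⟩; omega), hrow c hx1 hx2] at hx3
            exact absurd hx3 (by simp)
          have hI2 : ¬ (r = i ∧ b < c ∧ c < k ∧ D (h, c) = false) := by
            rintro ⟨-, hz1, hz2, -⟩; omega
          have hR2 : ¬ (r = i ∧ j < c ∧ c < k ∧ D (h, c) = false) := by
            rintro ⟨-, hz1, hz2, hz3⟩
            rcases hsplit with hz | hz
            · rw [hrow c hz1 hz] at hz3; exact absurd hz3 (by simp)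
            · omega
          rw [if_neg hO2, if_neg hO3, if_neg hI1, if_neg hI2, if_neg hI3,
            if_neg hR2, if_neg hR3]
    · have hO2 : ¬ (r = i ∧ j < c ∧ c < b ∧ X = false) := fun hx => hri hx.1
      have hI1 : ¬ ((r, c) : ℕ × ℕ) = (i, b) := by
        intro hcon; exact hri (congrArg Prod.fst hcon)
      have hI2 : ¬ (r = i ∧ b < c ∧ c < k ∧ D (h, c) = false) := fun hx => hri hx.1
      have hR2 : ¬ (r = i ∧ j < c ∧ c < k ∧ D (h, c) = false) := fun hx => hri hx.1
      by_cases hrh : r = h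
      · by_cases hjc : j < c
        · by_cases hcb2 : c ≤ b
          · by_cases hceq : c = b
            · have hXf : X = false := by
                rw [hX, if_neg (show ¬(b < c ∧ c ≤ k ∧ D (h, c) = false) by
                  rintro ⟨hz, -⟩; omega), hceq]
                exact hhb
              rw [if_neg hO2, if_pos ⟨hrh, hjc, hcb2, hXf⟩,
                if_neg hR2, if_pos ⟨hrh, hjc, by omega, by rw [hceq]; exact hhb⟩]
            · have hclt : c < b := by omega
              have hcross := hrow c hjc hclt
              have hO3 : ¬ (r = h ∧ j < c ∧ c ≤ b ∧ X = false) := by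
                rintro ⟨-, -, -, hx⟩
                rw [hX, if_neg (show ¬(b < c ∧ c ≤ k ∧ D (h, c) = false) by
                  rintro ⟨hz, -⟩; omega), hcross] at hx
                exact absurd hx (by simp)
              have hI3 : ¬ (r = h ∧ b < c ∧ c ≤ k ∧ D (h, c) = false) := by
                rintro ⟨-, hz, -⟩; omega
              have hR3 : ¬ (r = h ∧ j < c ∧ c ≤ k ∧ D (h, c) = false) := by
                rintro ⟨-, -, -, hx⟩; rw [hcross] at hx; exact absurd hx (by simp)
              rw [if_neg hO2, if_neg hO3, if_neg hI1, if_neg hI2, if_neg hI3,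
                if_neg hR2, if_neg hR3]
          · have hblt : b < c := by omega
            have hO3 : ¬ (r = h ∧ j < c ∧ c ≤ b ∧ X = false) := by
              rintro ⟨-, -, hz, -⟩; omega
            by_cases hcnd : c ≤ k ∧ D (h, c) = false
            · rw [if_neg hO2, if_neg hO3, if_neg hI1, if_neg hI2,
                if_pos ⟨hrh, hblt, hcnd.1, hcnd.2⟩,
                if_neg hR2, if_pos ⟨hrh, hjc, hcnd.1, hcnd.2⟩]
            · have hI3 : ¬ (r = h ∧ b < c ∧ c ≤ k ∧ D (h, c) = false) :=
                fun hx => hcnd ⟨hx.2.2.1, hx.2.2.2⟩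
              have hR3 : ¬ (r = h ∧ j < c ∧ c ≤ k ∧ D (h, c) = false) :=
                fun hx => hcnd ⟨hx.2.2.1, hx.2.2.2⟩
              rw [if_neg hO2, if_neg hO3, if_neg hI1, if_neg hI2, if_neg hI3,
                if_neg hR2, if_neg hR3]
        · have hO3 : ¬ (r = h ∧ j < c ∧ c ≤ b ∧ X = false) := fun hx => hjc hx.2.1
          have hI3 : ¬ (r = h ∧ b < c ∧ c ≤ k ∧ D (h, c) = false) := by
            rintro ⟨-, hz, -⟩; omega
          have hR3 : ¬ (r = h ∧ j < c ∧ c ≤ k ∧ D (h, c) = false) :=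
            fun hx => hjc hx.2.1
          rw [if_neg hO2, if_neg hO3, if_neg hI1, if_neg hI2, if_neg hI3,
            if_neg hR2, if_neg hR3]
      · have hO3 : ¬ (r = h ∧ j < c ∧ c ≤ b ∧ X = false) := fun hx => hrh hx.1
        have hI3 : ¬ (r = h ∧ b < c ∧ c ≤ k ∧ D (h, c) = false) := fun hx => hrh hx.1
        have hR3 : ¬ (r = h ∧ j < c ∧ c ≤ k ∧ D (h, c) = false) := fun hx => hrh hx.1
        rw [if_neg hO2, if_neg hO3, if_neg hI1, if_neg hI2, if_neg hI3,
          if_neg hR2, if_neg hR3]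

end PipeDream

namespace PipeDream

open scoped Classical

lemma hookT_start {D : PipeDream} {i b h k : ℕ} : hookT D i b h k (i, b) = false := by
  simp [hookT]

lemma hookT_out {D : PipeDream} {i b h k : ℕ} (r c : ℕ)
    (hne : ¬((r, c) : ℕ × ℕ) = (i, b))
    (h2 : ¬(r = i ∧ b < c ∧ c < k ∧ D (h, c) = false))
    (h3 : ¬(r = h ∧ b < c ∧ c ≤ k ∧ D (h, c) = false)) :
    hookT D i b h k (r, c) = D (r, c) := by
  have he : hookT D i b h k (r, c) =
      (if ((r, c) : ℕ × ℕ) = (i, b) then false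
       else if r = i ∧ b < c ∧ c < k ∧ D (h, c) = false then false
       else if r = h ∧ b < c ∧ c ≤ k ∧ D (h, c) = false then true
       else D (r, c)) := rfl
  rw [he, if_neg hne, if_neg h2, if_neg h3]

lemma hookT_staircase {n : ℕ} {D : PipeDream} {i b h k : ℕ}
    (hst : InStaircase n D) (h1 : 1 ≤ h) (hhi : h < i) (hb1 : 1 ≤ b)
    (hki : k + i ≤ n + 2) : InStaircase n (hookT D i b h k) := by
  intro r c hrc
  have he : hookT D i b h k (r, c) =
      (if ((r, c) : ℕ × ℕ) = (i, b) then false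
       else if r = i ∧ b < c ∧ c < k ∧ D (h, c) = false then false
       else if r = h ∧ b < c ∧ c ≤ k ∧ D (h, c) = false then true
       else D (r, c)) := rfl
  rw [he] at hrc
  split_ifs at hrc with g1 g2 g3
  · obtain ⟨gr, gc1, gc2, -⟩ := g3
    exact ⟨by omega, by omega, by omega⟩
  · exact hst r c hrc

end PipeDream

namespace PipeDream

open scoped Classical

lemma T_row_gt {n : ℕ} {D : PipeDream} {p j h q : ℕ}
    (pf : PathFacts n j h p q (Path n D p j)) :
    ∀ r c : ℕ, p < r → T n D p j (r, c) = D (r, c) := by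
  intro r c hgt
  simp only [T]
  rw [if_neg (show ¬(c = j ∧ hIdx D p j ≤ r ∧ r ≤ p ∧
      (∃ c', (r, c') ∈ Path n D p j ∧ D (r, c') = false)) by
        rintro ⟨-, -, hz, -⟩; omega),
    if_neg (show ¬(r = p ∧ j ≤ c ∧ c ≤ kIdx n D p j ∧
      (∃ r', (r', c) ∈ Path n D p j ∧ D (r', c) = false)) by
        rintro ⟨hz, -⟩; omega),
    if_neg (show ¬(((r, c) : ℕ × ℕ) ∈ Path n D p j ∧ (r, c) ≠ (hIdx D p j, j) ∧
      (r, c) ≠ (p, kIdx n D p j) ∧ D (r, c) = false) by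
        rintro ⟨hz, -⟩
        have h2 : r ≤ p := (pf.sub _ hz).2.1
        omega)]

lemma T_out_col {n : ℕ} {D : PipeDream} {p j h q : ℕ} (hjq : j < q)
    (hkq : kIdx n D p j = q)
    (pf : PathFacts n j h p q (Path n D p j)) :
    ∀ r c : ℕ, (c < j ∨ q < c) → T n D p j (r, c) = D (r, c) := by
  intro r c hout
  simp only [T]
  rw [if_neg (show ¬(c = j ∧ hIdx D p j ≤ r ∧ r ≤ p ∧
      (∃ c', (r, c') ∈ Path n D p j ∧ D (r, c') = false)) by
        rintro ⟨hz, -⟩; omega),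
    if_neg (show ¬(r = p ∧ j ≤ c ∧ c ≤ kIdx n D p j ∧
      (∃ r', (r', c) ∈ Path n D p j ∧ D (r', c) = false)) by
        rintro ⟨-, hz1, hz2, -⟩
        rw [hkq] at hz2
        omega),
    if_neg (show ¬(((r, c) : ℕ × ℕ) ∈ Path n D p j ∧ (r, c) ≠ (hIdx D p j, j) ∧
      (r, c) ≠ (p, kIdx n D p j) ∧ D (r, c) = false) by
        rintro ⟨hz, -⟩
        have h2 : j ≤ c := (pf.sub _ hz).2.2.1
        have h3 : c ≤ q := (pf.sub _ hz).2.2.2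
        omega)]

end PipeDream

namespace PipeDream

open scoped Classical

lemma moveAux_succ (n f : ℕ) (D : PipeDream) (i j : ℕ) :
    moveAux n (f + 1) D i j =
      if maxBumpRow n D i j = hIdx D i j ∧ minBumpCol n D i j = kIdx n D i j then
        ladderMove n D i j
      else if hIdx D i j < maxBumpRow n D i j then
        moveAux n f (moveAux n f D (maxBumpRow n D i j) j) i j
      else
        moveAux n f (moveAux n f D i (minBumpCol n D i j)) i j := rfl

theorem moveAux_eq_T {n : ℕ} : ∀ m : ℕ, ∀ (D : PipeDream) (i j f : ℕ),
    InStaircase n D → Movable D i j →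
    (i - hIdx D i j) + (kIdx n D i j - j) ≤ m → m < f →
    moveAux n f D i j = T n D i j := by
  intro m
  induction m using Nat.strong_induction_on with
  | _ m IH =>
  intro D i j f hst hm hmeas hf
  obtain ⟨f', rfl⟩ : ∃ f', f = f' + 1 := ⟨f - 1, by omega⟩
  have hh := hIdx_spec hm
  have hk := kIdx_spec hst hm
  have asp := maxBumpRow_spec hh hk
  have bsp := minBumpCol_spec hh hk
  have hj1 : 1 ≤ j := (hst i j hm.1).2.1
  rw [moveAux_succ]
  rcases Nat.lt_or_ge (hIdx D i j) (maxBumpRow n D i j) with hlt | hge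
  · -- case (ii) : recurse on the row a = maxBumpRow
    rw [if_neg (fun hcon => by omega), if_pos hlt]
    set a := maxBumpRow n D i j with ha
    have hhi := hh.lt
    have hjk := hk.lt
    have hkn := hk.le
    have hai : a < i := asp.lt
    have hja : D (a, j) = true := hh.cross a hlt hai
    have hmaj : Movable D a j := ⟨hja, hIdx D i j, hh.one_le, hlt, hh.bump⟩
    have hidxa : hIdx D a j = hIdx D i j :=
      hIdx_eq ⟨hh.one_le, hlt, hh.bump,
        fun r hr1 hr2 => hh.cross r hr1 (lt_trans hr2 hai)⟩
    have hk2 : KSpec n D a j (kIdx n D a j) := kIdx_spec hst hmaj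
    have hjk2 : j < kIdx n D a j := hk2.lt
    have hk2le : kIdx n D a j ≤ kIdx n D i j := by
      obtain ⟨q, hq1, hq2, hq3⟩ := asp.bump
      have hqj : j < q := by
        rcases Nat.lt_or_ge j q with h' | h'
        · exact h'
        · have : q = j := by omega
          rw [this, hja] at hq3; exact absurd hq3 (by simp)
      have : kIdx n D a j ≤ q := by
        by_contra hb
        push_neg at hb
        rw [hk2.cross q hqj hb] at hq3; exact absurd hq3 (by simp)
      omega
    have hinner : moveAux n f' D a j = T n D a j := by
      apply IH (m - 1) (by omega) D a j f' hst hmaj ?_ (by omega)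
      rw [hidxa]
      omega
    rw [hinner]
    have ps2 : PosSpec n D j (hIdx D i j) a (kIdx n D a j) := by
      have := posSpec_of_movable hst hmaj
      rwa [hidxa] at this
    have pf2 : PathFacts n j (hIdx D i j) a (kIdx n D a j) (Path n D a j) :=
      pathMaster hst a (kIdx n D a j) a ps2 (le_refl _)
    -- decomposition of the path
    have hPdec : Path n D i j =
        ((((Finset.Icc a i).image fun r => (r, kIdx n D i j)) ∪
          ((Finset.Icc (kIdx n D a j) (kIdx n D i j)).image fun t => (a, t))) ∪
          Path n D a j) := by
      have ps1 := posSpec_of_movable hst hm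
      have h2 := ps1.p_two
      unfold Path
      obtain ⟨f'', hfi⟩ : ∃ f'', i = f'' + 1 := ⟨i - 1, by omega⟩
      rw [hfi] at ps1 ⊢
      rw [pathAux_step f'' ps1 (hfi ▸ ha.symm) hja hk2]
      rw [← hfi]
      congr 1
      exact pathAux_fuel hst a (kIdx n D a j) f'' a ps2 (by omega) (le_refl _)
    have hPmem : ∀ x y : ℕ, ((x, y) ∈ Path n D i j) ↔
        ((y = kIdx n D i j ∧ a ≤ x ∧ x ≤ i) ∨
          (x = a ∧ kIdx n D a j ≤ y ∧ y ≤ kIdx n D i j) ∨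
          (x, y) ∈ Path n D a j) := by
      intro x y
      rw [hPdec, Finset.mem_union, mem_hook, or_assoc]
    -- evaluations of D2 := T n D a j
    have E1 : ∀ r c : ℕ, a < r → T n D a j (r, c) = D (r, c) :=
      fun r c hgt => T_row_gt pf2 r c hgt
    have E2 : ∀ r c : ℕ, (c < j ∨ kIdx n D a j < c) → T n D a j (r, c) = D (r, c) :=
      fun r c hout => T_out_col hjk2 rfl pf2 r c hout
    have hTev : ∀ x y : ℕ, T n D a j (x, y) =
        (if y = j ∧ hIdx D a j ≤ x ∧ x ≤ a ∧
            (∃ c', (x, c') ∈ Path n D a j ∧ D (x, c') = false) then false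
         else if x = a ∧ j ≤ y ∧ y ≤ kIdx n D a j ∧
            (∃ r', (r', y) ∈ Path n D a j ∧ D (r', y) = false) then false
         else if ((x, y) : ℕ × ℕ) ∈ Path n D a j ∧ (x, y) ≠ (hIdx D a j, j) ∧
            (x, y) ≠ (a, kIdx n D a j) ∧ D (x, y) = false then true
         else D (x, y)) := fun x y => rfl
    have beta : T n D a j (a, j) = false := by
      rw [hTev a j,
        if_pos ⟨rfl, by rw [hidxa]; omega, le_refl _,
          kIdx n D a j, pf2.mem_start, hk2.bump⟩]
    have gamma : ∀ c, j < c → T n D a j (a, c) =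
        (if c ≤ kIdx n D a j ∧ (∃ r', (r', c) ∈ Path n D a j ∧ D (r', c) = false)
          then false else D (a, c)) := by
      intro c hc
      rw [hTev a c]
      rw [if_neg (show ¬(c = j ∧ hIdx D a j ≤ a ∧ a ≤ a ∧
          (∃ c', (a, c') ∈ Path n D a j ∧ D (a, c') = false)) by
            rintro ⟨hz, -⟩; omega)]
      rw [if_neg (show ¬(((a, c) : ℕ × ℕ) ∈ Path n D a j ∧
          (a, c) ≠ (hIdx D a j, j) ∧ (a, c) ≠ (a, kIdx n D a j) ∧
          D (a, c) = false) by
            rintro ⟨hz, -, hne2, -⟩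
            exact hne2 (pf2.top _ hz rfl))]
      refine if_congr ?_ rfl rfl
      constructor
      · rintro ⟨-, -, hc2, hex⟩; exact ⟨hc2, hex⟩
      · rintro ⟨hc2, hex⟩; exact ⟨rfl, by omega, hc2, hex⟩
    -- facts for the outer pipe dream D2
    have hst2 : InStaircase n (T n D a j) := by
      intro r c hrc
      simp only [T] at hrc
      split_ifs at hrc with g1 g2 g3
      · obtain ⟨gmem, -, gne2, -⟩ := g3
        have hsub := pf2.sub _ gmem
        have h1 : hIdx D i j ≤ r := hsub.1
        have h2 : r ≤ a := hsub.2.1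
        have h3 : j ≤ c := hsub.2.2.1
        have hrna : r ≠ a := by
          intro he
          exact gne2 (pf2.top _ gmem he)
        have hstai : r + c ≤ n + 1 := pf2.stair _ gmem (by omega)
        have hh1 := hh.one_le
        exact ⟨by omega, by omega, by omega⟩
      · exact hst r c hrc
    have v1 : T n D a j (i, j) = true := by rw [E1 i j hai]; exact hm.1
    have v3 : ∀ r, a < r → r < i → T n D a j (r, j) = true := by
      intro r hr1 hr2
      rw [E1 r j hr1]
      exact hh.cross r (by omega) hr2
    have hm2 : Movable (T n D a j) i j := ⟨v1, a, by omega, hai, beta⟩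
    have hidx2 : hIdx (T n D a j) i j = a := hIdx_eq ⟨by omega, hai, beta, v3⟩
    have hkidx2 : kIdx n (T n D a j) i j = kIdx n D i j := by
      refine kIdx_eq ⟨hjk, hkn, ?_, ?_⟩
      · rw [E1 i _ hai]; exact hk.bump
      · intro c hc1 hc2
        rw [E1 i c hai]
        exact hk.cross c hc1 hc2
    have hmax2 : maxBumpRow n (T n D a j) i j = a := by
      refine maxBumpRow_eq hidx2 hkidx2
        ⟨le_refl _, hai, ⟨j, le_refl _, by omega, beta⟩, ?_⟩
      intro p hp1 hp2 q hq1 hq2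
      rw [E1 p q hp1]
      exact asp.cross p hp1 hp2 q hq1 hq2
    have houter : moveAux n f' (T n D a j) i j = T n (T n D a j) i j := by
      apply IH (m - 1) (by omega) _ i j f' hst2 hm2 ?_ (by omega)
      rw [hidx2, hkidx2]
      omega
    have houterT : T n (T n D a j) i j =
        hookT (T n D a j) i j a (kIdx n D i j) := by
      have h1 := T_hook hst2 hm2 (by rw [hmax2, hidx2])
      rw [h1, hidx2, hkidx2]
    rw [houter, houterT]
    -- final pointwise comparison
    funext st
    obtain ⟨r, c⟩ := st
    have hexp : hookT (T n D a j) i j a (kIdx n D i j) (r, c) =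
        (if ((r, c) : ℕ × ℕ) = (i, j) then false
         else if r = i ∧ j < c ∧ c < kIdx n D i j ∧ T n D a j (a, c) = false
           then false
         else if r = a ∧ j < c ∧ c ≤ kIdx n D i j ∧ T n D a j (a, c) = false
           then true
         else T n D a j (r, c)) := rfl
    have hTev1 : ∀ x y : ℕ, T n D i j (x, y) =
        (if y = j ∧ hIdx D i j ≤ x ∧ x ≤ i ∧
            (∃ c', (x, c') ∈ Path n D i j ∧ D (x, c') = false) then false
         else if x = i ∧ j ≤ y ∧ y ≤ kIdx n D i j ∧
            (∃ r', (r', y) ∈ Path n D i j ∧ D (r', y) = false) then false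
         else if ((x, y) : ℕ × ℕ) ∈ Path n D i j ∧ (x, y) ≠ (hIdx D i j, j) ∧
            (x, y) ≠ (i, kIdx n D i j) ∧ D (x, y) = false then true
         else D (x, y)) := fun x y => rfl
    rw [hexp, hTev1 r c]
    by_cases hri : r = i
    · have hrna : ¬ r = a := by omega
      by_cases hcj : c = j
      · rw [if_pos (show ((r, c) : ℕ × ℕ) = (i, j) by rw [hri, hcj]),
          if_pos (show c = j ∧ hIdx D i j ≤ r ∧ r ≤ i ∧
            (∃ c', (r, c') ∈ Path n D i j ∧ D (r, c') = false) from
            ⟨hcj, by omega, by omega, kIdx n D i j,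
              (hPmem r (kIdx n D i j)).mpr (Or.inl ⟨rfl, by omega, by omega⟩),
              by rw [hri]; exact hk.bump⟩)]
      · rw [if_neg (show ¬((r, c) : ℕ × ℕ) = (i, j) by
            intro hcon; exact hcj (congrArg Prod.snd hcon)),
          if_neg (show ¬(c = j ∧ hIdx D i j ≤ r ∧ r ≤ i ∧
            (∃ c', (r, c') ∈ Path n D i j ∧ D (r, c') = false)) from
            fun hx => hcj hx.1)]
        by_cases hck : c = kIdx n D i j
        · rw [if_neg (show ¬(r = i ∧ j < c ∧ c < kIdx n D i j ∧
              T n D a j (a, c) = false) by rintro ⟨-, -, hz, -⟩; omega),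
            if_neg (show ¬(r = a ∧ j < c ∧ c ≤ kIdx n D i j ∧
              T n D a j (a, c) = false) from fun hx => hrna hx.1),
            if_pos (show r = i ∧ j ≤ c ∧ c ≤ kIdx n D i j ∧
              (∃ r', (r', c) ∈ Path n D i j ∧ D (r', c) = false) from
              ⟨hri, by omega, by omega, i,
                (hPmem i c).mpr (Or.inl ⟨hck, by omega, le_refl _⟩),
                by rw [hck]; exact hk.bump⟩),
            E1 r c (by omega), hri, hck]
          exact hk.bump
        · by_cases hrange : j < c ∧ c < kIdx n D i j
          · have key : (∃ r', (r', c) ∈ Path n D i j ∧ D (r', c) = false) ↔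
                T n D a j (a, c) = false := by
              rw [gamma c hrange.1]
              constructor
              · rintro ⟨r', hmem', hb'⟩
                rw [hPmem] at hmem'
                rcases hmem' with ⟨hz, -, -⟩ | ⟨hz, hz1, -⟩ | hz
                · exact absurd hz (by omega)
                · rw [hz] at hb'
                  by_cases hcond : c ≤ kIdx n D a j ∧
                      (∃ r'', (r'', c) ∈ Path n D a j ∧ D (r'', c) = false)
                  · rw [if_pos hcond]
                  · rw [if_neg hcond]; exact hb'
                · have hcle : c ≤ kIdx n D a j := (pf2.sub _ hz).2.2.2
                  rw [if_pos ⟨hcle, r', hz, hb'⟩]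
              · intro hval
                by_cases hcond : c ≤ kIdx n D a j ∧
                    (∃ r', (r', c) ∈ Path n D a j ∧ D (r', c) = false)
                · obtain ⟨-, r', hz, hb'⟩ := hcond
                  exact ⟨r', (hPmem r' c).mpr (Or.inr (Or.inr hz)), hb'⟩
                · rw [if_neg hcond] at hval
                  have hcge : kIdx n D a j ≤ c := by
                    by_contra hb
                    push_neg at hb
                    rw [hk2.cross c hrange.1 hb] at hval
                    exact absurd hval (by simp)
                  exact ⟨a, (hPmem a c).mpr (Or.inr (Or.inl ⟨rfl, hcge, by omega⟩)),
                    hval⟩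
            by_cases hD2 : T n D a j (a, c) = false
            · rw [if_pos ⟨hri, hrange.1, hrange.2, hD2⟩,
                if_pos ⟨hri, by omega, by omega, key.mpr hD2⟩]
            · rw [if_neg (show ¬(r = i ∧ j < c ∧ c < kIdx n D i j ∧
                  T n D a j (a, c) = false) from fun hx => hD2 hx.2.2.2),
                if_neg (show ¬(r = a ∧ j < c ∧ c ≤ kIdx n D i j ∧
                  T n D a j (a, c) = false) from fun hx => hrna hx.1),
                if_neg (show ¬(r = i ∧ j ≤ c ∧ c ≤ kIdx n D i j ∧
                  (∃ r', (r', c) ∈ Path n D i j ∧ D (r', c) = false)) from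
                  fun hx => hD2 (key.mp hx.2.2.2)),
                if_neg (show ¬(((r, c) : ℕ × ℕ) ∈ Path n D i j ∧
                  (r, c) ≠ (hIdx D i j, j) ∧ (r, c) ≠ (i, kIdx n D i j) ∧
                  D (r, c) = false) by
                    rintro ⟨hz, -⟩
                    rw [hPmem] at hz
                    rcases hz with ⟨hz1, -, -⟩ | ⟨hz1, -, -⟩ | hz1
                    · omega
                    · omega
                    · have := (pf2.sub _ hz1).2.1; omega),
                E1 r c (by omega)]
          · rw [if_neg (show ¬(r = i ∧ j < c ∧ c < kIdx n D i j ∧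
                T n D a j (a, c) = false) by rintro ⟨-, hz1, hz2, -⟩; exact hrange ⟨hz1, hz2⟩),
              if_neg (show ¬(r = a ∧ j < c ∧ c ≤ kIdx n D i j ∧
                T n D a j (a, c) = false) from fun hx => hrna hx.1),
              if_neg (show ¬(r = i ∧ j ≤ c ∧ c ≤ kIdx n D i j ∧
                (∃ r', (r', c) ∈ Path n D i j ∧ D (r', c) = false)) by
                  rintro ⟨-, hz1, hz2, -⟩
                  exact hrange ⟨by omega, by omega⟩),
              if_neg (show ¬(((r, c) : ℕ × ℕ) ∈ Path n D i j ∧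
                (r, c) ≠ (hIdx D i j, j) ∧ (r, c) ≠ (i, kIdx n D i j) ∧
                D (r, c) = false) by
                  rintro ⟨hz, -⟩
                  rw [hPmem] at hz
                  rcases hz with ⟨hz1, -, -⟩ | ⟨hz1, -, -⟩ | hz1
                  · omega
                  · omega
                  · have := (pf2.sub _ hz1).2.1; omega),
              E1 r c (by omega)]
    · have hne1 : ¬((r, c) : ℕ × ℕ) = (i, j) := by
        intro hcon; exact hri (congrArg Prod.fst hcon)
      rw [if_neg hne1,
        if_neg (show ¬(r = i ∧ j < c ∧ c < kIdx n D i j ∧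
          T n D a j (a, c) = false) from fun hx => hri hx.1),
        if_neg (show ¬(r = i ∧ j ≤ c ∧ c ≤ kIdx n D i j ∧
          (∃ r', (r', c) ∈ Path n D i j ∧ D (r', c) = false)) from
          fun hx => hri hx.1)]
      by_cases hra : r = a
      · by_cases hcj : c = j
        · rw [if_neg (show ¬(r = a ∧ j < c ∧ c ≤ kIdx n D i j ∧
              T n D a j (a, c) = false) by rintro ⟨-, hz, -⟩; omega),
            if_pos (show c = j ∧ hIdx D i j ≤ r ∧ r ≤ i ∧
              (∃ c', (r, c') ∈ Path n D i j ∧ D (r, c') = false) from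
              ⟨hcj, by omega, by omega, kIdx n D a j,
                (hPmem r (kIdx n D a j)).mpr (Or.inr (Or.inr (by
                  rw [hra]; exact pf2.mem_start))),
                by rw [hra]; exact hk2.bump⟩),
            hra, hcj]
          exact beta
        · rw [if_neg (show ¬(c = j ∧ hIdx D i j ≤ r ∧ r ≤ i ∧
              (∃ c', (r, c') ∈ Path n D i j ∧ D (r, c') = false)) from
              fun hx => hcj hx.1)]
          by_cases hjc : j < c ∧ c ≤ kIdx n D i j
          · refine Eq.trans (b := true) ?_ ?_
            · by_cases hD2 : T n D a j (a, c) = false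
              · rw [if_pos ⟨hra, hjc.1, hjc.2, hD2⟩]
              · rw [if_neg (show ¬(r = a ∧ j < c ∧ c ≤ kIdx n D i j ∧
                    T n D a j (a, c) = false) from fun hx => hD2 hx.2.2.2), hra]
                simp only [Bool.not_eq_false] at hD2
                exact hD2
            · symm
              by_cases hDac : D (a, c) = false
              · have hcge : kIdx n D a j ≤ c := by
                  by_contra hb
                  push_neg at hb
                  rw [hk2.cross c hjc.1 hb] at hDac
                  exact absurd hDac (by simp)
                rw [if_pos (show ((r, c) : ℕ × ℕ) ∈ Path n D i j ∧
                    (r, c) ≠ (hIdx D i j, j) ∧ (r, c) ≠ (i, kIdx n D i j) ∧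
                    D (r, c) = false from
                    ⟨(hPmem r c).mpr (Or.inr (Or.inl ⟨hra, hcge, hjc.2⟩)),
                      by intro hcon; have := congrArg Prod.fst hcon; omega,
                      by intro hcon; have := congrArg Prod.fst hcon; omega,
                      by rw [hra]; exact hDac⟩)]
              · rw [if_neg (show ¬(((r, c) : ℕ × ℕ) ∈ Path n D i j ∧
                    (r, c) ≠ (hIdx D i j, j) ∧ (r, c) ≠ (i, kIdx n D i j) ∧
                    D (r, c) = false) by
                      rintro ⟨-, -, -, hz⟩
                      rw [hra] at hz
                      exact hDac hz), hra]
                simp only [Bool.not_eq_false] at hDac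
                exact hDac
          · have hcout : c < j ∨ kIdx n D i j < c := by omega
            rw [if_neg (show ¬(r = a ∧ j < c ∧ c ≤ kIdx n D i j ∧
                T n D a j (a, c) = false) by
                  rintro ⟨-, hz1, hz2, -⟩; omega),
              if_neg (show ¬(((r, c) : ℕ × ℕ) ∈ Path n D i j ∧
                (r, c) ≠ (hIdx D i j, j) ∧ (r, c) ≠ (i, kIdx n D i j) ∧
                D (r, c) = false) by
                  rintro ⟨hz, -⟩
                  rw [hPmem] at hz
                  rcases hz with ⟨hz1, -, -⟩ | ⟨-, hz1, hz2⟩ | hz1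
                  · omega
                  · omega
                  · have h1 := (pf2.sub _ hz1).2.2.1
                    have h2 := (pf2.sub _ hz1).2.2.2
                    omega),
              hra, E2 a c (by omega)]
      · by_cases hmid : a < r
        · rw [if_neg (show ¬(r = a ∧ j < c ∧ c ≤ kIdx n D i j ∧
              T n D a j (a, c) = false) from fun hx => hra hx.1),
            E1 r c hmid,
            if_neg (show ¬(c = j ∧ hIdx D i j ≤ r ∧ r ≤ i ∧
              (∃ c', (r, c') ∈ Path n D i j ∧ D (r, c') = false)) by
                rintro ⟨-, -, hz1, c', hcmem, hcb⟩
                have hrlt : r < i := by omega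
                rw [hPmem] at hcmem
                rcases hcmem with ⟨hz2, -, -⟩ | ⟨hz2, -, -⟩ | hz2
                · rw [hz2, asp.cross r hmid hrlt (kIdx n D i j) (by omega)
                    (le_refl _)] at hcb
                  exact absurd hcb (by simp)
                · omega
                · have := (pf2.sub _ hz2).2.1; omega),
            if_neg (show ¬(((r, c) : ℕ × ℕ) ∈ Path n D i j ∧
              (r, c) ≠ (hIdx D i j, j) ∧ (r, c) ≠ (i, kIdx n D i j) ∧
              D (r, c) = false) by
                rintro ⟨hz, -, -, hcb⟩
                rw [hPmem] at hz
                rcases hz with ⟨hz1, -, hb2⟩ | ⟨hz1, -, -⟩ | hz1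
                · have hrlt : r < i := by omega
                  rw [hz1] at hcb
                  rw [asp.cross r hmid hrlt (kIdx n D i j) (by omega)
                    (le_refl _)] at hcb
                  exact absurd hcb (by simp)
                · omega
                · have := (pf2.sub _ hz1).2.1; omega)]
        · have hrlta : r < a := by omega
          rw [if_neg (show ¬(r = a ∧ j < c ∧ c ≤ kIdx n D i j ∧
              T n D a j (a, c) = false) from fun hx => hra hx.1),
            hTev r c, hidxa]
          have iffA : (c = j ∧ hIdx D i j ≤ r ∧ r ≤ a ∧
              (∃ c', (r, c') ∈ Path n D a j ∧ D (r, c') = false)) ↔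
              (c = j ∧ hIdx D i j ≤ r ∧ r ≤ i ∧
              (∃ c', (r, c') ∈ Path n D i j ∧ D (r, c') = false)) := by
            constructor
            · rintro ⟨hc1, hc2, -, c', hcmem, hcb⟩
              exact ⟨hc1, hc2, by omega, c',
                (hPmem r c').mpr (Or.inr (Or.inr hcmem)), hcb⟩
            · rintro ⟨hc1, hc2, -, c', hcmem, hcb⟩
              rw [hPmem] at hcmem
              rcases hcmem with ⟨-, hz1, -⟩ | ⟨hz1, -, -⟩ | hz1
              · omega
              · omega
              · exact ⟨hc1, hc2, by omega, c', hz1, hcb⟩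
          have iffC : (((r, c) : ℕ × ℕ) ∈ Path n D a j ∧
              (r, c) ≠ (hIdx D i j, j) ∧ (r, c) ≠ (a, kIdx n D a j) ∧
              D (r, c) = false) ↔
              (((r, c) : ℕ × ℕ) ∈ Path n D i j ∧
              (r, c) ≠ (hIdx D i j, j) ∧ (r, c) ≠ (i, kIdx n D i j) ∧
              D (r, c) = false) := by
            constructor
            · rintro ⟨hz, hne, -, hb⟩
              exact ⟨(hPmem r c).mpr (Or.inr (Or.inr hz)), hne,
                by intro hcon; have := congrArg Prod.fst hcon; omega, hb⟩
            · rintro ⟨hz, hne, -, hb⟩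
              rw [hPmem] at hz
              rcases hz with ⟨-, hz1, -⟩ | ⟨hz1, -, -⟩ | hz1
              · exact absurd hz1 (by omega)
              · exact absurd hz1 (by omega)
              · exact ⟨hz1, hne,
                  by intro hcon; have := congrArg Prod.fst hcon; omega, hb⟩
          rw [if_neg (show ¬(r = a ∧ j ≤ c ∧ c ≤ kIdx n D a j ∧
            (∃ r', (r', c) ∈ Path n D a j ∧ D (r', c) = false)) from
            fun hx => hra hx.1)]
          rw [if_congr iffA rfl (if_congr iffC rfl rfl)]
  · have haeq : maxBumpRow n D i j = hIdx D i j := le_antisymm hge asp.le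
    by_cases hbk : minBumpCol n D i j = kIdx n D i j
    · -- base case : ladder move
      rw [if_pos ⟨haeq, hbk⟩, T_hook hst hm haeq]
      have bcross : ∀ q, j < q → q < kIdx n D i j →
          ∀ p, hIdx D i j ≤ p → p ≤ i → D (p, q) = true := by
        have := bsp.cross
        rw [hbk] at this
        exact this
      have hhi := hh.lt
      funext st
      obtain ⟨r, c⟩ := st
      simp only [ladderMove, hookT]
      by_cases h1 : ((r, c) : ℕ × ℕ) = (i, j)
      · rw [if_pos h1, if_pos h1]
      · rw [if_neg h1, if_neg h1]
        by_cases h2 : ((r, c) : ℕ × ℕ) = (hIdx D i j, kIdx n D i j)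
        · have hr : r = hIdx D i j := congrArg Prod.fst h2
          have hc : c = kIdx n D i j := congrArg Prod.snd h2
          have hne2 : ¬ (r = i ∧ j < c ∧ c < kIdx n D i j ∧
              D (hIdx D i j, c) = false) := by
            rintro ⟨he, -⟩; rw [hr] at he; omega
          by_cases h5 : D (hIdx D i j, kIdx n D i j) = false
          · rw [if_pos h2, if_neg hne2,
              if_pos ⟨hr, by rw [hc]; exact hk.lt, by rw [hc], by rw [hc]; exact h5⟩]
          · have hne3 : ¬ (r = hIdx D i j ∧ j < c ∧ c ≤ kIdx n D i j ∧
                D (hIdx D i j, c) = false) := by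
              rintro ⟨-, -, -, hb⟩; rw [hc] at hb; exact h5 hb
            rw [if_pos h2, if_neg hne2, if_neg hne3, hr, hc]
            simp only [Bool.not_eq_false] at h5
            exact h5.symm
        · have hne2 : ¬ (r = i ∧ j < c ∧ c < kIdx n D i j ∧
              D (hIdx D i j, c) = false) := by
            rintro ⟨he, hc1, hc2, hb⟩
            rw [bcross c hc1 hc2 (hIdx D i j) (le_refl _) (le_of_lt hhi)] at hb
            exact absurd hb (by simp)
          have hne3 : ¬ (r = hIdx D i j ∧ j < c ∧ c ≤ kIdx n D i j ∧
              D (hIdx D i j, c) = false) := by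
            rintro ⟨he, hc1, hc2, hb⟩
            rcases Nat.lt_or_ge c (kIdx n D i j) with h' | h'
            · rw [bcross c hc1 h' (hIdx D i j) (le_refl _) (le_of_lt hhi)] at hb
              exact absurd hb (by simp)
            · exact h2 (by rw [he, le_antisymm hc2 h'])
          rw [if_neg h2, if_neg hne2, if_neg hne3]
    · -- case (iii) : recurse on the column b = minBumpCol
      rw [if_neg (fun hcon => hbk hcon.2), if_neg (not_lt.mpr hge)]
      have hhi := hh.lt
      have hjk := hk.lt
      have hkn := hk.le
      have hbltk : minBumpCol n D i j < kIdx n D i j := lt_of_le_of_ne bsp.le hbk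
      have hjb := bsp.lt
      have arect := asp.cross
      rw [haeq] at arect
      have hib : D (i, minBumpCol n D i j) = true := hk.cross _ hjb hbltk
      have hhb : D (hIdx D i j, minBumpCol n D i j) = false := by
        obtain ⟨p, hp1, hp2, hp3⟩ := bsp.bump
        rcases Nat.lt_or_ge p i with hpi | hpi
        · rcases Nat.lt_or_ge (hIdx D i j) p with hp' | hp'
          · rw [arect p hp' hpi _ (le_of_lt hjb) bsp.le] at hp3
            exact absurd hp3 (by simp)
          · have hpe : p = hIdx D i j := le_antisymm hp' hp1
            rwa [hpe] at hp3
        · have hpe : p = i := le_antisymm hp2 hpi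
          rw [hpe, hib] at hp3
          exact absurd hp3 (by simp)
      have hmib : Movable D i (minBumpCol n D i j) :=
        ⟨hib, hIdx D i j, hh.one_le, hh.lt, hhb⟩
      have hidxb : hIdx D i (minBumpCol n D i j) = hIdx D i j :=
        hIdx_eq ⟨hh.one_le, hh.lt, hhb,
          fun r hr1 hr2 => arect r hr1 hr2 _ (le_of_lt hjb) bsp.le⟩
      have hkidxb : kIdx n D i (minBumpCol n D i j) = kIdx n D i j :=
        kIdx_eq ⟨hbltk, hk.le, hk.bump,
          fun c hc1 hc2 => hk.cross c (lt_trans hjb hc1) hc2⟩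
      have hmaxb : maxBumpRow n D i (minBumpCol n D i j) = hIdx D i j :=
        maxBumpRow_eq hidxb hkidxb
          ⟨le_refl _, hh.lt, ⟨minBumpCol n D i j, le_refl _, bsp.le, hhb⟩,
            fun p hp1 hp2 q hq1 hq2 =>
              arect p hp1 hp2 q (le_trans (le_of_lt hjb) hq1) hq2⟩
      have hinner : moveAux n f' D i (minBumpCol n D i j) =
          T n D i (minBumpCol n D i j) := by
        apply IH (m - 1) (by omega) D i _ f' hst hmib ?_ (by omega)
        rw [hidxb, hkidxb]
        omega
      have hinnerT : T n D i (minBumpCol n D i j) =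
          hookT D i (minBumpCol n D i j) (hIdx D i j) (kIdx n D i j) := by
        have h1 := T_hook hst hmib (by rw [hmaxb, hidxb])
        rw [h1, hidxb, hkidxb]
      rw [hinner, hinnerT]
      -- facts about the intermediate pipe dream D2
      have hki : kIdx n D i j + i ≤ n + 2 :=
        (posSpec_of_movable hst hm).q_add_p hst
      have v1 : hookT D i (minBumpCol n D i j) (hIdx D i j) (kIdx n D i j) (i, j)
          = true := by
        rw [hookT_out i j (by intro hcon; have := congrArg Prod.snd hcon; omega)
          (by rintro ⟨-, hz, -⟩; omega)
          (by rintro ⟨hz, -⟩; omega)]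
        exact hm.1
      have v2 : hookT D i (minBumpCol n D i j) (hIdx D i j) (kIdx n D i j)
          (hIdx D i j, j) = false := by
        rw [hookT_out _ j (by intro hcon; have := congrArg Prod.fst hcon; omega)
          (by rintro ⟨hz, -⟩; omega)
          (by rintro ⟨-, hz, -⟩; omega)]
        exact hh.bump
      have v3 : ∀ r, hIdx D i j < r → r < i →
          hookT D i (minBumpCol n D i j) (hIdx D i j) (kIdx n D i j) (r, j)
            = true := by
        intro r hr1 hr2
        rw [hookT_out r j (by intro hcon; have := congrArg Prod.fst hcon; omega)
          (by rintro ⟨hz, -⟩; omega)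
          (by rintro ⟨hz, -⟩; omega)]
        exact hh.cross r hr1 hr2
      have v5 : ∀ c, j < c → c < minBumpCol n D i j →
          hookT D i (minBumpCol n D i j) (hIdx D i j) (kIdx n D i j) (i, c)
            = true := by
        intro c hc1 hc2
        rw [hookT_out i c (by intro hcon; have := congrArg Prod.snd hcon; omega)
          (by rintro ⟨-, hz, -⟩; omega)
          (by rintro ⟨hz, -⟩; omega)]
        exact hk.cross c hc1 (by omega)
      have v6 : ∀ p, hIdx D i j < p → p < i → ∀ q, j ≤ q → q ≤ minBumpCol n D i j →
          hookT D i (minBumpCol n D i j) (hIdx D i j) (kIdx n D i j) (p, q)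
            = true := by
        intro p hp1 hp2 q hq1 hq2
        rw [hookT_out p q (by intro hcon; have := congrArg Prod.fst hcon; omega)
          (by rintro ⟨hz, -⟩; omega)
          (by rintro ⟨hz, -⟩; omega)]
        exact arect p hp1 hp2 q hq1 (by omega)
      have hst2 : InStaircase n
          (hookT D i (minBumpCol n D i j) (hIdx D i j) (kIdx n D i j)) :=
        hookT_staircase hst hh.one_le hh.lt (by omega) (by omega)
      have hm2 : Movable
          (hookT D i (minBumpCol n D i j) (hIdx D i j) (kIdx n D i j)) i j :=
        ⟨v1, hIdx D i j, hh.one_le, hh.lt, v2⟩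
      have hidx2 : hIdx
          (hookT D i (minBumpCol n D i j) (hIdx D i j) (kIdx n D i j)) i j
          = hIdx D i j := hIdx_eq ⟨hh.one_le, hh.lt, v2, v3⟩
      have hkidx2 : kIdx n
          (hookT D i (minBumpCol n D i j) (hIdx D i j) (kIdx n D i j)) i j
          = minBumpCol n D i j :=
        kIdx_eq ⟨hjb, by omega, hookT_start, v5⟩
      have hmax2 : maxBumpRow n
          (hookT D i (minBumpCol n D i j) (hIdx D i j) (kIdx n D i j)) i j
          = hIdx D i j :=
        maxBumpRow_eq hidx2 hkidx2
          ⟨le_refl _, hh.lt, ⟨j, le_refl _, le_of_lt hjb, v2⟩, v6⟩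
      have houter : moveAux n f'
          (hookT D i (minBumpCol n D i j) (hIdx D i j) (kIdx n D i j)) i j =
          T n (hookT D i (minBumpCol n D i j) (hIdx D i j) (kIdx n D i j)) i j := by
        apply IH (m - 1) (by omega) _ i j f' hst2 hm2 ?_ (by omega)
        rw [hidx2, hkidx2]
        omega
      have houterT : T n
          (hookT D i (minBumpCol n D i j) (hIdx D i j) (kIdx n D i j)) i j =
          hookT (hookT D i (minBumpCol n D i j) (hIdx D i j) (kIdx n D i j)) i j
            (hIdx D i j) (minBumpCol n D i j) := by
        have h1 := T_hook hst2 hm2 (by rw [hmax2, hidx2])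
        rw [h1, hidx2, hkidx2]
      rw [houter, houterT, T_hook hst hm haeq]
      exact hookT_comp hh.lt hjb hbltk hhb
        (fun q hq1 hq2 => bsp.cross q hq1 hq2 _ (le_refl _) (le_of_lt hh.lt))

end PipeDream

open scoped Classical

open PipeDream in
/-- explicit characterization of M_{ij}(D): push a bump to (r,j)
for every bump row r of Path_{ij}(D), a bump to (i,c) for every bump column c
of Path_{ij}(D), and turn every non-endpoint bump of the path into a cross. -/
theorem stmt5 (n : ℕ) (w : Equiv.Perm ℕ) (D : PipeDream) (hD : D ∈ RPD n w)
    (i j : ℕ) (hmov : Movable D i j) :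
    move n D i j = fun st =>
      if st.2 = j ∧ hIdx D i j ≤ st.1 ∧ st.1 ≤ i ∧
          (∃ c, (st.1, c) ∈ Path n D i j ∧ D (st.1, c) = false) then false
      else if st.1 = i ∧ j ≤ st.2 ∧ st.2 ≤ kIdx n D i j ∧
          (∃ r, (r, st.2) ∈ Path n D i j ∧ D (r, st.2) = false) then false
      else if st ∈ Path n D i j ∧ st ≠ (hIdx D i j, j) ∧
          st ≠ (i, kIdx n D i j) ∧ D st = false then true
      else D st := by
  obtain ⟨hst, -, -⟩ := hD
  have hh := PipeDream.hIdx_spec hmov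
  have hk := PipeDream.kIdx_spec hst hmov
  have hij := hst i j hmov.1
  have hin : i ≤ n := by omega
  have hh1 := hh.one_le
  have hkn := hk.le
  have hj1 : 1 ≤ j := hij.2.1
  have hfuel : 2 * n < (n + 2) ^ (n + 2) := by
    have h2 : (n + 2) ^ 2 ≤ (n + 2) ^ (n + 2) :=
      Nat.pow_le_pow_right (by omega) (by omega)
    have h3 : (n + 2) ^ 2 = n * n + 4 * n + 4 := by ring
    omega
  have key := PipeDream.moveAux_eq_T (n := n) (2 * n) D i j ((n + 2) ^ (n + 2))
    hst hmov (by omega) hfuel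
  exact key
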